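/- arXiv:2506.07472 — 2 statements merged into one kernel-verified Lean document; each statement's English description precedes it below -/
import Mathlib

section
/- Let K₁ and K₂ be closed subsets of [0,1]. Then K₁ ∩ (0,1) = K₂ ∩ (0,1) if and only if for every random vector (X₁,…,X_d) of real random variables on Ω, the vector is K₁-concentrated if and only if it is K₂-concentrated. -/
open MeasureTheory Filter Set

section Defs

variable {Ω : Type*} [MeasurableSpace Ω]

/-- An atomless probability space: every event can be split to achieve any smaller measure
(Sierpiński's property, equivalent to atomlessness for probability measures). -/
def Atomless (P : Measure Ω) : Prop :=
  ∀ A : Set Ω, MeasurableSet A → ∀ r : ENNReal, r ≤ P A →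
    ∃ B : Set Ω, B ⊆ A ∧ MeasurableSet B ∧ P B = r

/-- `A` is a tail event for `X`: outside a null set, `X ω ≥ X ω'` for `ω ∈ A`, `ω' ∈ Aᶜ`. -/
def IsTailEvent (P : Measure Ω) (X : Ω → ℝ) (A : Set Ω) : Prop :=
  MeasurableSet A ∧ ∃ N : Set Ω, P N = 0 ∧
    ∀ ω ∈ A, ω ∉ N → ∀ ω' ∈ Aᶜ, ω' ∉ N → X ω' ≤ X ω

/-- `A` is a `p`-tail event for `X`: a tail event with `P A = 1 - p`. -/
def IsPTailEvent (P : Measure Ω) (X : Ω → ℝ) (p : ℝ) (A : Set Ω) : Prop :=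
  IsTailEvent P X A ∧ P A = ENNReal.ofReal (1 - p)

/-- A random vector is `p`-concentrated if a single event is a `p`-tail event for every
component. -/
def PConcentrated (P : Measure Ω) {d : ℕ} (X : Fin d → Ω → ℝ) (p : ℝ) : Prop :=
  ∃ A : Set Ω, ∀ i, IsPTailEvent P (X i) p A

/-- A random vector is `K`-concentrated if it is `p`-concentrated for every `p ∈ K`. -/
def KConcentrated (P : Measure Ω) {d : ℕ} (X : Fin d → Ω → ℝ) (K : Set ℝ) : Prop :=
  ∀ p ∈ K, PConcentrated P X p

/-- Left quantile function `Q_X⁻(p) = inf {x | ℙ(X ≤ x) ≥ p}` (also `VaR_p`). -/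
noncomputable def leftQuantile (P : Measure Ω) (X : Ω → ℝ) (p : ℝ) : ℝ :=
  sInf {x : ℝ | ENNReal.ofReal p ≤ P {ω | X ω ≤ x}}

/-- Right quantile function `Q_X⁺(p) = inf {x | ℙ(X ≤ x) > p}` (also `VaR⁺_p`). -/
noncomputable def rightQuantile (P : Measure Ω) (X : Ω → ℝ) (p : ℝ) : ℝ :=
  sInf {x : ℝ | ENNReal.ofReal p < P {ω | X ω ≤ x}}

/-- `Q_X : [0,1] → ℝ`, equal to `Q_X⁺` at `0` and to `Q_X⁻` on `(0,1]`. -/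
noncomputable def Q (P : Measure Ω) (X : Ω → ℝ) (p : ℝ) : ℝ :=
  if p = 0 then rightQuantile P X 0 else leftQuantile P X p

/-- Membership in L∞: essentially bounded (and measurable) random variables. -/
def MemLinf (P : Measure Ω) (X : Ω → ℝ) : Prop :=
  Measurable X ∧ ∃ C : ℝ, ∀ᵐ ω ∂P, |X ω| ≤ C

/-- A functional `ρ` on L∞ is `K`-additive if it is additive on every `K`-concentrated
random vector (of dimension `d ≥ 2`) with essentially bounded components. -/
def KAdditive (P : Measure Ω) (K : Set ℝ) (ρ : (Ω → ℝ) → ℝ) : Prop :=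
  ∀ d : ℕ, 2 ≤ d → ∀ X : Fin d → Ω → ℝ, (∀ i, MemLinf P (X i)) →
    KConcentrated P X K → ρ (∑ i, X i) = ∑ i, ρ (X i)

/-- A pair of random variables is comonotonic. -/
def ComonotonePair (P : Measure Ω) (X Z : Ω → ℝ) : Prop :=
  ∀ᵐ w ∂(P.prod P), 0 ≤ (X w.1 - X w.2) * (Z w.1 - Z w.2)

/-- A random vector is `g`-comonotonic: some random variable `Z` with quantile function `g`
on `[0,1]` is comonotonic with every component. -/
def GComonotone (P : Measure Ω) {d : ℕ} (g : ℝ → ℝ) (X : Fin d → Ω → ℝ) : Prop :=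
  ∃ Z : Ω → ℝ, Measurable Z ∧ (∀ p ∈ Icc (0:ℝ) 1, Q P Z p = g p) ∧
    ∀ i, ComonotonePair P (X i) Z

/-- A functional `ρ` on L∞ is `g`-additive if it is additive on every `g`-comonotonic
random vector (of dimension `d ≥ 2`) with essentially bounded components. -/
def GAdditive (P : Measure Ω) (g : ℝ → ℝ) (ρ : (Ω → ℝ) → ℝ) : Prop :=
  ∀ d : ℕ, 2 ≤ d → ∀ X : Fin d → Ω → ℝ, (∀ i, MemLinf P (X i)) →
    GComonotone P g X → ρ (∑ i, X i) = ∑ i, ρ (X i)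

/-- The distortion riskmetric `I_h`. -/
noncomputable def distortionRM (P : Measure Ω) (h : ℝ → ℝ) (X : Ω → ℝ) : ℝ :=
  (∫ x in Iio (0:ℝ), (h ((P {ω | x < X ω}).toReal) - h 1)) +
    ∫ x in Ioi (0:ℝ), h ((P {ω | x < X ω}).toReal)

/-- The spectral risk measure `ρ_g(X) = ∫₀¹ g(t) Q_X(t) dt`. -/
noncomputable def specRM (P : Measure Ω) (g : ℝ → ℝ) (X : Ω → ℝ) : ℝ :=
  ∫ t in (0:ℝ)..1, g t * Q P X t

/-- Expected Shortfall at level `p`. -/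
noncomputable def ES (P : Measure Ω) (p : ℝ) (X : Ω → ℝ) : ℝ :=
  (1 - p)⁻¹ * ∫ q in p..1, leftQuantile P X q

end Defs

/-- The class 𝒢 of increasing functions on `[0,1]`, right-continuous at `0` and
left-continuous on `(0,1]`. -/
def MemG (g : ℝ → ℝ) : Prop :=
  MonotoneOn g (Icc 0 1) ∧
    Tendsto g (nhdsWithin 0 (Ioi 0)) (nhds (g 0)) ∧
    ∀ p ∈ Ioc (0:ℝ) 1, Tendsto g (nhdsWithin p (Iio p)) (nhds (g p))

/-- `p` is a point of strict increase on the right of `g`. -/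
def IsPSIR (g : ℝ → ℝ) (p : ℝ) : Prop :=
  p ∈ Ico (0:ℝ) 1 ∧ ∀ s ∈ Ioc p 1, g p < g s

/-- `p` is a point of strict increase on the left of `g`. -/
def IsPSIL (g : ℝ → ℝ) (p : ℝ) : Prop :=
  p ∈ Ioc (0:ℝ) 1 ∧ ∀ s ∈ Ico (0:ℝ) p, g s < g p

/-- The set of points of strict increase of `g`. -/
def PSI (g : ℝ → ℝ) : Set ℝ :=
  {p | IsPSIR g p ∨ IsPSIL g p}

/-- `f ≾ g`: there is an increasing `h` with `f = h ∘ g` a.e. on `[0,1]`. -/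
def Prec (f g : ℝ → ℝ) : Prop :=
  ∃ h : ℝ → ℝ, Monotone h ∧
    ∀ᵐ t ∂(volume.restrict (Icc (0:ℝ) 1)), f t = h (g t)

/-- The map `𝒱 : K ↦ (p ↦ sup ((0,p) ∩ K))` (with `sup ∅ = 0`, the junk value of `sSup` in `ℝ`). -/
noncomputable def VK (K : Set ℝ) (p : ℝ) : ℝ :=
  sSup (Ioo (0:ℝ) p ∩ K)

/-- A risk spectrum: a nonnegative element of 𝒢 integrating to 1. -/
def IsRiskSpectrum (g : ℝ → ℝ) : Prop :=
  MemG g ∧ (∀ t ∈ Icc (0:ℝ) 1, 0 ≤ g t) ∧ (∫ t in (0:ℝ)..1, g t) = 1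
lemma tail_inter_zero {Ω : Type*} [MeasurableSpace Ω] (P : Measure Ω)
    {X : Ω → ℝ} {A S T : Set Ω} (hT : IsTailEvent P X A)
    (hST : ∀ ω ∈ S, ∀ ω' ∈ T, X ω < X ω')
    (hS : P (A ∩ S) ≠ 0) : P (Aᶜ ∩ T) = 0 := by
  obtain ⟨-, N, hN, h⟩ := hT
  by_contra h0
  have h1 : ((A ∩ S) \ N).Nonempty :=
    nonempty_of_measure_ne_zero (by rwa [measure_diff_null hN])
  have h2 : ((Aᶜ ∩ T) \ N).Nonempty :=
    nonempty_of_measure_ne_zero (by rwa [measure_diff_null hN])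
  obtain ⟨ω, ⟨hωA, hωS⟩, hωN⟩ := h1
  obtain ⟨ω', ⟨hω'A, hω'T⟩, hω'N⟩ := h2
  have := h ω hωA hωN ω' hω'A hω'N
  have := hST ω hωS ω' hω'T
  linarith

lemma counterexample {Ω : Type*} [MeasurableSpace Ω] (P : Measure Ω)
    [IsProbabilityMeasure P] (hP : Atomless P) {a b : ℝ}
    (ha : 0 < a) (hab : a < b) (hb : b < 1) :
    ∃ X : Fin 2 → Ω → ℝ, (∀ i, Measurable (X i)) ∧
      (∀ q : ℝ, 0 ≤ q → q ≤ 1 → q ∉ Ioo a b → PConcentrated P X q) ∧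
      (∀ p ∈ Ioo a b, ¬ PConcentrated P X p) := by
  classical
  set c : ℝ := (b - a) / 2 with hc
  have hc0 : 0 < c := by simp only [hc]; linarith
  -- build the partition S₁, S₂, S₃, S₄ with measures a, c, c, 1-b
  obtain ⟨S₁, -, mS₁, hS₁⟩ := hP univ MeasurableSet.univ (ENNReal.ofReal a)
    (by rw [measure_univ]; exact ENNReal.ofReal_le_one.mpr (by linarith))
  have hS₁c : P S₁ᶜ = ENNReal.ofReal (1 - a) := by
    rw [prob_compl_eq_one_sub mS₁, hS₁, ENNReal.ofReal_sub _ ha.le, ENNReal.ofReal_one]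
  obtain ⟨S₂, hS₂sub, mS₂, hS₂⟩ := hP S₁ᶜ mS₁.compl (ENNReal.ofReal c)
    (by rw [hS₁c]; exact ENNReal.ofReal_le_ofReal (by simp only [hc]; linarith))
  have hd12 : Disjoint S₁ S₂ := disjoint_compl_right.mono_right hS₂sub
  have hU12 : P (S₁ ∪ S₂) = ENNReal.ofReal (a + c) := by
    rw [measure_union hd12 mS₂, hS₁, hS₂, ← ENNReal.ofReal_add ha.le hc0.le]
  have hU12c : P (S₁ ∪ S₂)ᶜ = ENNReal.ofReal (1 - (a + c)) := by
    rw [prob_compl_eq_one_sub (mS₁.union mS₂), hU12,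
      ENNReal.ofReal_sub _ (by linarith), ENNReal.ofReal_one]
  obtain ⟨S₃, hS₃sub, mS₃, hS₃⟩ := hP (S₁ ∪ S₂)ᶜ (mS₁.union mS₂).compl (ENNReal.ofReal c)
    (by rw [hU12c]; exact ENNReal.ofReal_le_ofReal (by simp only [hc]; linarith))
  set S₄ : Set Ω := (S₁ ∪ S₂ ∪ S₃)ᶜ with hS₄def
  have mS₄ : MeasurableSet S₄ := ((mS₁.union mS₂).union mS₃).compl
  have hd123 : Disjoint (S₁ ∪ S₂) S₃ := disjoint_compl_right.mono_right hS₃sub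
  have habc : a + c + c = b := by simp only [hc]; ring
  have hU123 : P (S₁ ∪ S₂ ∪ S₃) = ENNReal.ofReal b := by
    rw [measure_union hd123 mS₃, hU12, hS₃, ← ENNReal.ofReal_add (by linarith) hc0.le, habc]
  have hS₄ : P S₄ = ENNReal.ofReal (1 - b) := by
    rw [hS₄def, prob_compl_eq_one_sub ((mS₁.union mS₂).union mS₃), hU123,
      ENNReal.ofReal_sub _ (by linarith), ENNReal.ofReal_one]
  -- subset facts
  have h3c1 : S₃ ⊆ S₁ᶜ := hS₃sub.trans (compl_subset_compl.mpr subset_union_left)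
  have h3c2 : S₃ ⊆ S₂ᶜ := hS₃sub.trans (compl_subset_compl.mpr subset_union_right)
  have h4c1 : S₄ ⊆ S₁ᶜ := compl_subset_compl.mpr (subset_union_left.trans subset_union_left)
  have h4c2 : S₄ ⊆ S₂ᶜ := compl_subset_compl.mpr (subset_union_right.trans subset_union_left)
  have h4c3 : S₄ ⊆ S₃ᶜ := compl_subset_compl.mpr subset_union_right
  have hUuniv : S₁ ∪ S₂ ∪ S₃ ∪ S₄ = univ := union_compl_self _
  -- the random vector
  set X : Fin 2 → Ω → ℝ := fun i ω =>
    if ω ∈ S₂ then (if i = 0 then 1 else 2)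
    else if ω ∈ S₃ then (if i = 0 then 2 else 1)
    else if ω ∈ S₄ then 3 else 0 with hX
  have hXm : ∀ i, Measurable (X i) := fun i =>
    Measurable.ite mS₂ measurable_const
      (Measurable.ite mS₃ measurable_const (Measurable.ite mS₄ measurable_const measurable_const))
  have val₁ : ∀ i, ∀ ω ∈ S₁, X i ω = 0 := by
    intro i ω hω
    have n2 : ω ∉ S₂ := fun h => hS₂sub h hω
    have n3 : ω ∉ S₃ := fun h => hS₃sub h (Or.inl hω)
    have n4 : ω ∉ S₄ := fun h => h (Or.inl (Or.inl hω))
    simp [hX, n2, n3, n4]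
  have val₂ : ∀ i, ∀ ω ∈ S₂, X i ω = if i = 0 then 1 else 2 := by
    intro i ω hω; simp [hX, hω]
  have val₃ : ∀ i, ∀ ω ∈ S₃, X i ω = if i = 0 then 2 else 1 := by
    intro i ω hω
    have n2 : ω ∉ S₂ := h3c2 hω
    simp [hX, n2, hω]
  have val₄ : ∀ i, ∀ ω ∈ S₄, X i ω = 3 := by
    intro i ω hω
    have n2 : ω ∉ S₂ := h4c2 hω
    have n3 : ω ∉ S₃ := h4c3 hω
    simp [hX, n2, n3, hω]
  have hnn : ∀ i ω, 0 ≤ X i ω := by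
    intro i ω; simp only [hX]; split_ifs <;> norm_num
  have hub : ∀ i ω, X i ω ≤ 3 := by
    intro i ω; simp only [hX]; split_ifs <;> norm_num
  have hzero : ∀ i ω, ω ∉ S₂ → ω ∉ S₃ → ω ∉ S₄ → X i ω = 0 := by
    intro i ω n2 n3 n4; simp [hX, n2, n3, n4]
  refine ⟨X, hXm, ?_, ?_⟩
  · -- concentration away from (a,b)
    intro q hq0 hq1 hq
    have hqd : q ≤ a ∨ b ≤ q := by
      simp only [mem_Ioo, not_and_or, not_lt] at hq
      exact hq
    rcases hqd with hqa | hqb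
    · obtain ⟨B, hBsub, mB, hB⟩ := hP S₁ mS₁ (ENNReal.ofReal (a - q))
        (by rw [hS₁]; exact ENNReal.ofReal_le_ofReal (by linarith))
      have hrest : S₂ ∪ (S₃ ∪ S₄) ⊆ S₁ᶜ :=
        union_subset hS₂sub (union_subset h3c1 h4c1)
      have d1 : Disjoint B (S₂ ∪ (S₃ ∪ S₄)) :=
        disjoint_compl_right.mono hBsub hrest
      have d2 : Disjoint S₂ (S₃ ∪ S₄) :=
        disjoint_compl_right.mono_right (union_subset h3c2 h4c2)
      have d3 : Disjoint S₃ S₄ := disjoint_compl_right.mono_right h4c3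
      refine ⟨B ∪ (S₂ ∪ (S₃ ∪ S₄)), fun i => ⟨⟨mB.union (mS₂.union (mS₃.union mS₄)), ∅,
        measure_empty, ?_⟩, ?_⟩⟩
      · intro ω hω _ ω' hω' _
        simp only [mem_compl_iff, mem_union, not_or] at hω'
        obtain ⟨-, n2, n3, n4⟩ := hω'
        rw [hzero i ω' n2 n3 n4]; exact hnn i ω
      · rw [measure_union d1 (mS₂.union (mS₃.union mS₄)), measure_union d2 (mS₃.union mS₄),
          measure_union d3 mS₄, hB, hS₂, hS₃, hS₄,
          show (1:ℝ) - q = (a - q) + (c + (c + (1 - b))) by simp only [hc]; ring,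
          ENNReal.ofReal_add (by linarith) (by linarith),
          ENNReal.ofReal_add hc0.le (by linarith),
          ENNReal.ofReal_add hc0.le (by linarith)]
    · obtain ⟨B, hBsub, mB, hB⟩ := hP S₄ mS₄ (ENNReal.ofReal (1 - q))
        (by rw [hS₄]; exact ENNReal.ofReal_le_ofReal (by linarith))
      refine ⟨B, fun i => ⟨⟨mB, ∅, measure_empty, ?_⟩, hB⟩⟩
      intro ω hω _ ω' _ _
      rw [val₄ i ω (hBsub hω)]; exact hub i ω'
  · -- no concentration inside (a,b)
    rintro p ⟨hpa, hpb⟩ ⟨A, hA⟩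
    obtain ⟨hT1, hPA⟩ := hA 0
    obtain ⟨hT2, -⟩ := hA 1
    have mA : MeasurableSet A := hT1.1
    have hp0 : 0 < p := ha.trans hpa
    have hp1 : p < 1 := hpb.trans hb
    have hPAc : P Aᶜ = ENNReal.ofReal p := by
      rw [prob_compl_eq_one_sub mA, hPA]
      refine ENNReal.sub_eq_of_eq_add (by simp) ?_
      rw [← ENNReal.ofReal_add (by linarith) (by linarith), ← ENNReal.ofReal_one]
      norm_num
    have cover : ∀ B : Set Ω, P B ≤ P (B ∩ S₁) + P (B ∩ S₂) + P (B ∩ S₃) + P (B ∩ S₄) := by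
      intro B
      have hBeq : B ∩ S₁ ∪ B ∩ S₂ ∪ B ∩ S₃ ∪ B ∩ S₄ = B := by
        rw [← inter_union_distrib_left, ← inter_union_distrib_left,
          ← inter_union_distrib_left, hUuniv, inter_univ]
      calc P B = P (B ∩ S₁ ∪ B ∩ S₂ ∪ B ∩ S₃ ∪ B ∩ S₄) := by rw [hBeq]
        _ ≤ P (B ∩ S₁ ∪ B ∩ S₂ ∪ B ∩ S₃) + P (B ∩ S₄) := measure_union_le _ _
        _ ≤ (P (B ∩ S₁ ∪ B ∩ S₂) + P (B ∩ S₃)) + P (B ∩ S₄) := by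
            gcongr; exact measure_union_le _ _
        _ ≤ ((P (B ∩ S₁) + P (B ∩ S₂)) + P (B ∩ S₃)) + P (B ∩ S₄) := by
            gcongr; exact measure_union_le _ _
    have hap : ENNReal.ofReal a < ENNReal.ofReal p :=
      (ENNReal.ofReal_lt_ofReal_iff hp0).mpr hpa
    -- step 1 : P (A ∩ S₁) = 0
    have hA1 : P (A ∩ S₁) = 0 := by
      by_contra h0
      have z2 : P (Aᶜ ∩ S₂) = 0 := tail_inter_zero P hT1
        (fun ω hω ω' hω' => by rw [val₁ 0 ω hω, val₂ 0 ω' hω']; norm_num) h0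
      have z3 : P (Aᶜ ∩ S₃) = 0 := tail_inter_zero P hT1
        (fun ω hω ω' hω' => by rw [val₁ 0 ω hω, val₃ 0 ω' hω']; norm_num) h0
      have z4 : P (Aᶜ ∩ S₄) = 0 := tail_inter_zero P hT1
        (fun ω hω ω' hω' => by rw [val₁ 0 ω hω, val₄ 0 ω' hω']; norm_num) h0
      have hle : P Aᶜ ≤ ENNReal.ofReal a := by
        have := cover Aᶜ
        rw [z2, z3, z4] at this
        simpa using this.trans (by simpa using (measure_mono (inter_subset_right) :
          P (Aᶜ ∩ S₁) ≤ P S₁).trans_eq hS₁)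
      rw [hPAc] at hle
      exact absurd hle (not_le.mpr hap)
    by_cases h2 : P (A ∩ S₂) = 0
    · -- then A ∩ S₃ has positive measure
      have h3 : P (A ∩ S₃) ≠ 0 := by
        intro h0
        have := cover A
        rw [hA1, h2, h0] at this
        simp only [zero_add, add_zero] at this
        have hle : P A ≤ ENNReal.ofReal (1 - b) :=
          this.trans ((measure_mono inter_subset_right).trans_eq hS₄)
        rw [hPA] at hle
        exact absurd hle (not_le.mpr ((ENNReal.ofReal_lt_ofReal_iff (by linarith)).mpr
          (by linarith)))
      have z : P (Aᶜ ∩ S₂) = 0 := tail_inter_zero P hT2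
        (fun ω hω ω' hω' => by rw [val₃ 1 ω hω, val₂ 1 ω' hω']; norm_num) h3
      have : P S₂ = 0 := by
        have hsub : S₂ ⊆ (A ∩ S₂) ∪ (Aᶜ ∩ S₂) := by
          intro ω hω
          by_cases hA' : ω ∈ A
          · exact Or.inl ⟨hA', hω⟩
          · exact Or.inr ⟨hA', hω⟩
        have := (measure_mono (μ := P) hsub).trans (measure_union_le _ _)
        rw [h2, z] at this; simpa using this
      rw [hS₂] at this
      exact absurd this (by simp [ENNReal.ofReal_eq_zero, not_le, hc0])
    · -- A ∩ S₂ positive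
      have z3 : P (Aᶜ ∩ S₃) = 0 := tail_inter_zero P hT1
        (fun ω hω ω' hω' => by rw [val₂ 0 ω hω, val₃ 0 ω' hω']; norm_num) h2
      have z4 : P (Aᶜ ∩ S₄) = 0 := tail_inter_zero P hT1
        (fun ω hω ω' hω' => by rw [val₂ 0 ω hω, val₄ 0 ω' hω']; norm_num) h2
      have h3 : P (A ∩ S₃) ≠ 0 := by
        intro h0
        have hsub : S₃ ⊆ (A ∩ S₃) ∪ (Aᶜ ∩ S₃) := by
          intro ω hω
          by_cases hA' : ω ∈ A
          · exact Or.inl ⟨hA', hω⟩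
          · exact Or.inr ⟨hA', hω⟩
        have := (measure_mono (μ := P) hsub).trans (measure_union_le _ _)
        rw [h0, z3] at this
        simp only [add_zero, nonpos_iff_eq_zero] at this
        rw [hS₃] at this
        exact absurd this (by simp [ENNReal.ofReal_eq_zero, not_le, hc0])
      have zc2 : P (Aᶜ ∩ S₂) = 0 := tail_inter_zero P hT2
        (fun ω hω ω' hω' => by rw [val₃ 1 ω hω, val₂ 1 ω' hω']; norm_num) h3
      have hle : P Aᶜ ≤ ENNReal.ofReal a := by
        have := cover Aᶜ
        rw [zc2, z3, z4] at this
        simpa using this.trans (by simpa using (measure_mono (inter_subset_right) :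
          P (Aᶜ ∩ S₁) ≤ P S₁).trans_eq hS₁)
      rw [hPAc] at hle
      exact absurd hle (not_le.mpr hap)

/-- For closed `K₁, K₂ ⊆ [0,1]`, `K₁ ∩ (0,1) = K₂ ∩ (0,1)` iff
`K₁`-concentration and `K₂`-concentration coincide for all random vectors. -/
theorem stmt_16 {Ω : Type*} [MeasurableSpace Ω] (P : MeasureTheory.Measure Ω)
    [MeasureTheory.IsProbabilityMeasure P] (hP : Atomless P)
    (K₁ K₂ : Set ℝ) (hK₁c : IsClosed K₁) (hK₁ : K₁ ⊆ Icc 0 1)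
    (hK₂c : IsClosed K₂) (hK₂ : K₂ ⊆ Icc 0 1) :
    K₁ ∩ Ioo 0 1 = K₂ ∩ Ioo 0 1 ↔
      ∀ (d : ℕ) (X : Fin d → Ω → ℝ), (∀ i, Measurable (X i)) →
        (KConcentrated P X K₁ ↔ KConcentrated P X K₂) := by
  
  constructor
  · intro hEq d X hX
    have triv0 : PConcentrated P X 0 := ⟨univ, fun i => ⟨⟨MeasurableSet.univ, ∅, measure_empty,
        fun ω _ _ ω' hω' _ => absurd hω' (by simp)⟩, by simp⟩⟩
    have triv1 : PConcentrated P X 1 := ⟨∅, fun i => ⟨⟨MeasurableSet.empty, ∅, measure_empty,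
        fun ω hω => absurd hω (by simp)⟩, by simp⟩⟩
    have key : ∀ K K' : Set ℝ, K ⊆ Icc 0 1 → K ∩ Ioo 0 1 ⊆ K' → KConcentrated P X K' →
        KConcentrated P X K := by
      intro K K' hKI hsub hK' q hq
      by_cases hq01 : q ∈ Ioo (0:ℝ) 1
      · exact hK' q (hsub ⟨hq, hq01⟩)
      · obtain ⟨h0, h1⟩ := hKI hq
        simp only [mem_Ioo, not_and_or, not_lt] at hq01
        rcases hq01 with h | h
        · rw [le_antisymm h h0]; exact triv0
        · rw [le_antisymm h1 h]; exact triv1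
    constructor
    · exact key K₂ K₁ hK₂ (by rw [← hEq]; exact inter_subset_left)
    · exact key K₁ K₂ hK₁ (by rw [hEq]; exact inter_subset_left)
  · intro H
    have main : ∀ K K' : Set ℝ, IsClosed K' → K' ⊆ Icc 0 1 →
        (∀ X : Fin 2 → Ω → ℝ, (∀ i, Measurable (X i)) →
          KConcentrated P X K' → KConcentrated P X K) →
        K ∩ Ioo 0 1 ⊆ K' ∩ Ioo 0 1 := by
      rintro K K' hK'c hK'I himp p ⟨hpK, hp0, hp1⟩
      refine ⟨?_, hp0, hp1⟩
      by_contra hpK'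
      have hopen : IsOpen (K'ᶜ ∩ Ioo 0 1) := hK'c.isOpen_compl.inter isOpen_Ioo
      obtain ⟨ε, hε, hball⟩ := Metric.isOpen_iff.mp hopen p ⟨hpK', hp0, hp1⟩
      set δ : ℝ := min ε (min p (1 - p)) / 2 with hδ
      have hδ0 : 0 < δ := by
        have : 0 < min ε (min p (1 - p)) := lt_min hε (lt_min hp0 (by linarith))
        simp only [hδ]; linarith
      have hδε : δ < ε := by
        have h1 : min ε (min p (1 - p)) ≤ ε := min_le_left _ _
        simp only [hδ]; linarith
      have hδp : δ ≤ p / 2 := by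
        have : min ε (min p (1 - p)) ≤ p := (min_le_right _ _).trans (min_le_left _ _)
        simp only [hδ]; linarith
      have hδp1 : δ ≤ (1 - p) / 2 := by
        have : min ε (min p (1 - p)) ≤ 1 - p := (min_le_right _ _).trans (min_le_right _ _)
        simp only [hδ]; linarith
      obtain ⟨X, hXm, hconc, hnconc⟩ := counterexample P hP
        (show (0:ℝ) < p - δ by linarith) (show p - δ < p + δ by linarith)
        (show p + δ < 1 by linarith)
      have hK'conc : KConcentrated P X K' := by
        intro q hq
        obtain ⟨hq0, hq1⟩ := hK'I hq
        refine hconc q hq0 hq1 ?_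
        intro hmem
        simp only [mem_Ioo] at hmem
        have hq' : q ∈ Metric.ball p ε := by
          rw [Real.ball_eq_Ioo]
          exact ⟨by linarith [hmem.1], by linarith [hmem.2]⟩
        exact (hball hq').1 hq
      exact hnconc p ⟨by linarith, by linarith⟩ (himp X hXm hK'conc p hpK)
    exact Set.Subset.antisymm
      (main K₁ K₂ hK₂c hK₂ fun X hX => (H 2 X hX).mpr)
      (main K₂ K₁ hK₁c hK₁ fun X hX => (H 2 X hX).mp)
end

section
/- Let n ∈ ℕ and 0 < α₁ < ⋯ < α_n < 1. Then the set of spectral risk measures {ρ_g : g ∈ 𝒢₁, PSI(g) ∩ (0,1) = {α₁,…,α_n}} equals the set of functionals on L∞ of the form λ₀𝔼 + λ₁ ES_{α₁} + ⋯ + λ_n ES_{α_n}, where λ₀ ≥ 0, λ₁ > 0, …, λ_n > 0 and λ₀ + λ₁ + ⋯ + λ_n = 1. -/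
open MeasureTheory Filter Set

/-!
A spectrum `g ∈ 𝒢` is constant on every interval `(a, b] ⊆ [0, 1]` whose interior contains no
point of strict increase: otherwise the last point at which `g` keeps an earlier value would be
a PSIR. Hence, if `PSI(g) ∩ (0,1) = {α₁, …, α_n}`, then on `(0, 1]` the spectrum is a step
function `λ₀ + ∑ cᵢ 𝟙_{(αᵢ, 1]}` with jumps `cᵢ > 0`, each `αᵢ` being a PSIR and not a PSIL.
Conversely, such step functions are risk spectra with exactly these points of strict increase.
By the quantile transform (`VaR_U(X)` has the law of `X` when `U` is uniform on `(0, 1]`),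
`∫₀¹ VaR_t(X) dt = 𝔼 X`, so the step spectrum gives `λ₀ 𝔼 + ∑ cᵢ (1 - αᵢ) ES_{αᵢ}`, and
`∫₀¹ g = λ₀ + ∑ cᵢ (1 - αᵢ)`.
-/

section Quantile

variable {Ω : Type*} [MeasurableSpace Ω] {P : Measure Ω} [IsProbabilityMeasure P] {X : Ω → ℝ}

theorem leftQuantile_le_iff (hX : MemLinf P X) {p : ℝ} (hp : p ∈ Ioc 0 1) (x : ℝ) :
    leftQuantile P X p ≤ x ↔ ENNReal.ofReal p ≤ P {ω | X ω ≤ x} := by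
  obtain ⟨hXm, C, hC⟩ := hX
  have hC' : P {ω | ¬|X ω| ≤ C} = 0 := ae_iff.1 hC
  have hlow : ∀ y < -C, P {ω | X ω ≤ y} = 0 := fun y hy => by
    refine measure_mono_null (t := {ω | ¬|X ω| ≤ C})
      (fun ω (hω : X ω ≤ y) (hωC : |X ω| ≤ C) => ?_) hC'
    linarith [neg_abs_le (X ω)]
  have htop : P {ω | X ω ≤ C} = 1 :=
    (prob_compl_eq_zero_iff (measurableSet_le hXm measurable_const)).1 <|
      measure_mono_null (t := {ω | ¬|X ω| ≤ C}) (fun ω (hω : ¬X ω ≤ C) (hωC : |X ω| ≤ C) =>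
        hω ((le_abs_self _).trans hωC)) hC'
  have hbdd : BddBelow {y | ENNReal.ofReal p ≤ P {ω | X ω ≤ y}} := by
    refine ⟨-C, fun y (hy : ENNReal.ofReal p ≤ _) => not_lt.1 fun hyC => ?_⟩
    rw [hlow y hyC, nonpos_iff_eq_zero, ENNReal.ofReal_eq_zero] at hy
    exact absurd hy (not_le.2 hp.1)
  refine ⟨fun hx => ?_, fun hx => csInf_le hbdd hx⟩
  have : IsProbabilityMeasure (P.map X) := Measure.isProbabilityMeasure_map hXm.aemeasurable
  set F := ProbabilityTheory.cdf (P.map X)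
  have hF : ∀ y, ENNReal.ofReal p ≤ P {ω | X ω ≤ y} ↔ p ≤ F y := fun y => by
    rw [← ENNReal.ofReal_le_ofReal_iff (ProbabilityTheory.cdf_nonneg _ y),
      ProbabilityTheory.ofReal_cdf, Measure.map_apply hXm measurableSet_Iic]
    rfl
  have hne : {y | ENNReal.ofReal p ≤ P {ω | X ω ≤ y}}.Nonempty :=
    ⟨C, show _ ≤ P _ by rw [htop]; exact ENNReal.ofReal_le_one.2 hp.2⟩
  -- the quantile is attained because `F` is right-continuous
  have hright : ∀ z ∈ Ioi x, p ≤ F z := fun z hz => by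
    obtain ⟨y, hy, hyz⟩ := exists_lt_of_csInf_lt hne (hx.trans_lt hz)
    exact ((hF y).1 hy).trans (F.mono hyz.le)
  rw [hF]
  exact ge_of_tendsto ((F.right_continuous x).mono Ioi_subset_Ici_self)
    (eventually_nhdsWithin_of_forall hright)

theorem monotoneOn_leftQuantile (hX : MemLinf P X) : MonotoneOn (leftQuantile P X) (Ioc 0 1) :=
  fun _ hp _ hq hpq => (leftQuantile_le_iff hX hp _).2 <|
    (ENNReal.ofReal_le_ofReal hpq).trans ((leftQuantile_le_iff hX hq _).1 le_rfl)

theorem aemeasurable_leftQuantile (hX : MemLinf P X) :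
    AEMeasurable (leftQuantile P X) (volume.restrict (Ioc 0 1)) :=
  aemeasurable_restrict_of_monotoneOn measurableSet_Ioc (monotoneOn_leftQuantile hX)

theorem map_leftQuantile (hX : MemLinf P X) :
    (volume.restrict (Ioc 0 1)).map (leftQuantile P X) = P.map X := by
  refine Measure.ext_of_Iic _ _ fun x => ?_
  rw [Measure.map_apply_of_aemeasurable (aemeasurable_leftQuantile hX) measurableSet_Iic,
    Measure.map_apply hX.1 measurableSet_Iic, Measure.restrict_apply' measurableSet_Ioc]
  have hset : leftQuantile P X ⁻¹' Iic x ∩ Ioc 0 1 = Ioc 0 (P.real {ω | X ω ≤ x}) := by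
    ext p
    simp only [mem_inter_iff, mem_preimage, mem_Iic, mem_Ioc]
    have hiff : ∀ hp : p ∈ Ioc 0 1, leftQuantile P X p ≤ x ↔ p ≤ P.real {ω | X ω ≤ x} :=
      fun hp => (leftQuantile_le_iff hX hp x).trans
        (ENNReal.ofReal_le_iff_le_toReal (measure_ne_top _ _))
    refine ⟨fun ⟨hle, hp⟩ => ⟨hp.1, (hiff hp).1 hle⟩, fun ⟨hp0, hpx⟩ => ?_⟩
    have hp : p ∈ Ioc 0 1 := ⟨hp0, hpx.trans measureReal_le_one⟩
    exact ⟨(hiff hp).2 hpx, hp⟩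
  rw [hset, Real.volume_Ioc, sub_zero, measureReal_def, ENNReal.ofReal_toReal (measure_ne_top _ _)]
  rfl

theorem integrableOn_leftQuantile (hX : MemLinf P X) :
    IntegrableOn (leftQuantile P X) (Ioc 0 1) := by
  obtain ⟨hXm, C, hC⟩ := hX
  have hXint : Integrable X P :=
    Integrable.of_bound hXm.aestronglyMeasurable C (by simpa only [Real.norm_eq_abs] using hC)
  have := (integrable_map_measure aestronglyMeasurable_id hXm.aemeasurable).2 hXint
  rwa [← map_leftQuantile ⟨hXm, C, hC⟩,
    integrable_map_measure aestronglyMeasurable_id (aemeasurable_leftQuantile ⟨hXm, C, hC⟩)] at this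

theorem setIntegral_leftQuantile (hX : MemLinf P X) :
    ∫ p in Ioc 0 1, leftQuantile P X p = ∫ ω, X ω ∂P := by
  calc ∫ p in Ioc 0 1, leftQuantile P X p
      = ∫ y, y ∂((volume.restrict (Ioc 0 1)).map (leftQuantile P X)) :=
        (integral_map (aemeasurable_leftQuantile hX) aestronglyMeasurable_id).symm
    _ = ∫ ω, X ω ∂P := by
        rw [map_leftQuantile hX]
        exact integral_map hX.1.aemeasurable aestronglyMeasurable_id

end Quantile

open scoped Topology

theorem specRM_eq_setIntegral {Ω : Type*} [MeasurableSpace Ω] (P : Measure Ω) (g : ℝ → ℝ)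
    (X : Ω → ℝ) : specRM P g X = ∫ t in Ioc 0 1, g t * leftQuantile P X t := by
  rw [specRM, intervalIntegral.integral_of_le zero_le_one]
  refine setIntegral_congr_fun measurableSet_Ioc fun t ht => ?_
  simp only [Q, if_neg ht.1.ne']

theorem eq_right_of_Ioo_inter_PSI_eq_empty {g : ℝ → ℝ} (hg : MemG g) {a b t : ℝ} (ha : 0 ≤ a)
    (hb : b ≤ 1) (hPSI : Ioo a b ∩ PSI g = ∅) (ht : t ∈ Ioc a b) : g t = g b := by
  have hmem : ∀ {r}, r ∈ Icc t b → r ∈ Icc (0:ℝ) 1 := fun hr =>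
    ⟨ha.trans (ht.1.le.trans hr.1), hr.2.trans hb⟩
  have hb₀ : b ∈ Icc (0:ℝ) 1 := hmem ⟨ht.2, le_rfl⟩
  refine (hg.1 (hmem ⟨le_rfl, ht.2⟩) hb₀ ht.2).eq_of_not_lt fun hlt => ?_
  -- the last point `p` where `g` still equals `g t` is a PSIR of `g` inside `(a, b)`
  set S := {r ∈ Icc t b | g r ≤ g t}
  have hS : BddAbove S := ⟨b, fun r hr => hr.1.2⟩
  have htS : t ∈ S := ⟨⟨le_rfl, ht.2⟩, le_rfl⟩
  set p := sSup S
  have htp : t ≤ p := le_csSup hS htS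
  have hpb : p ≤ b := csSup_le ⟨t, htS⟩ fun r hr => hr.1.2
  have hp0 : 0 < p := ha.trans_lt (ht.1.trans_le htp)
  have hgp : g p ≤ g t := by
    refine le_of_tendsto (hg.2.2 p ⟨hp0, hpb.trans hb⟩) ?_
    filter_upwards [Ioo_mem_nhdsLT hp0] with r hr
    obtain ⟨w, hwS, hrw⟩ := exists_lt_of_lt_csSup ⟨t, htS⟩ hr.2
    exact (hg.1 ⟨hr.1.le, (hrw.le.trans hwS.1.2).trans hb⟩ (hmem hwS.1) hrw.le).trans hwS.2
  have hpb' : p < b := hpb.lt_of_ne fun h => (h ▸ hgp).not_gt hlt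
  have hpsir : IsPSIR g p := by
    refine ⟨⟨hp0.le, hpb'.trans_le hb⟩, fun s hs => hgp.trans_lt ?_⟩
    rcases le_or_gt s b with hsb | hsb
    · exact not_le.1 fun hst => notMem_of_csSup_lt hs.1 hS ⟨⟨htp.trans hs.1.le, hsb⟩, hst⟩
    · exact hlt.trans_le (hg.1 hb₀ ⟨hb₀.1.trans hsb.le, hs.2⟩ hsb.le)
  exact (eq_empty_iff_forall_notMem.1 hPSI) p ⟨⟨ht.1.trans_le htp, hpb'⟩, Or.inl hpsir⟩

theorem notMem_PSI_of_eventuallyEq {g : ℝ → ℝ} {p : ℝ} (hp : p ∈ Ioo 0 1)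
    (hg : g =ᶠ[𝓝 p] fun _ => g p) : p ∉ PSI g := by
  rintro (⟨-, hR⟩ | ⟨-, hL⟩)
  · obtain ⟨s, hgs, hs⟩ := ((hg.filter_mono nhdsWithin_le_nhds).and (Ioo_mem_nhdsGT hp.2)).exists
    exact (hR s (Ioo_subset_Ioc_self hs)).ne' hgs
  · obtain ⟨s, hgs, hs⟩ := ((hg.filter_mono nhdsWithin_le_nhds).and (Ioo_mem_nhdsLT hp.1)).exists
    exact (hL s (Ioo_subset_Ico_self hs)).ne hgs

theorem monotone_indicator_Ioi {a b : ℝ} (hb : 0 ≤ b) :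
    Monotone ((Ioi a).indicator fun _ => b) := by
  intro s t hst
  by_cases hs : a < s
  · rw [indicator_of_mem (mem_Ioi.2 hs), indicator_of_mem (mem_Ioi.2 (hs.trans_le hst))]
  · rw [indicator_of_notMem (notMem_Ioi.2 (not_lt.1 hs))]
    exact indicator_nonneg (fun _ _ => hb) t

noncomputable def stepSpectrum {n : ℕ} (l₀ : ℝ) (α c : Fin n → ℝ) (t : ℝ) : ℝ :=
  l₀ + ∑ i, (Ioi (α i)).indicator (fun _ => c i) t

section StepSpectrum

variable {n : ℕ} {l₀ : ℝ} {α c : Fin n → ℝ}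

theorem setIntegral_stepSpectrum_mul {f : ℝ → ℝ} (hf : IntegrableOn f (Ioc 0 1))
    (hα : ∀ i, 0 ≤ α i) :
    ∫ t in Ioc 0 1, stepSpectrum l₀ α c t * f t
      = l₀ * (∫ t in Ioc 0 1, f t) + ∑ i, c i * ∫ t in Ioc (α i) 1, f t := by
  simp only [stepSpectrum, add_mul, Finset.sum_mul, ← indicator_mul_left]
  rw [integral_add (hf.const_mul l₀) (integrable_finsetSum _ fun i _ =>
      (hf.const_mul (c i)).indicator measurableSet_Ioi),
    integral_finsetSum _ fun i _ => (hf.const_mul (c i)).indicator measurableSet_Ioi,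
    integral_const_mul]
  congr 1
  refine Finset.sum_congr rfl fun i _ => ?_
  rw [integral_indicator measurableSet_Ioi, Measure.restrict_restrict measurableSet_Ioi,
    inter_comm, Ioc_inter_Ioi, sup_of_le_right (hα i), integral_const_mul]

theorem integral_stepSpectrum (hα : ∀ i, α i ∈ Icc 0 1) :
    ∫ t in (0:ℝ)..1, stepSpectrum l₀ α c t = l₀ + ∑ i, c i * (1 - α i) := by
  have h := setIntegral_stepSpectrum_mul (l₀ := l₀) (c := c)
    (integrableOn_const (C := (1:ℝ)) measure_Ioc_lt_top.ne) (fun i => (hα i).1)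
  simp only [mul_one, setIntegral_const, smul_eq_mul, Real.volume_real_Ioc_of_le zero_le_one,
    Real.volume_real_Ioc_of_le (hα _).2, sub_zero] at h
  rw [intervalIntegral.integral_of_le zero_le_one, h]

theorem specRM_stepSpectrum {Ω : Type*} [MeasurableSpace Ω] {P : Measure Ω}
    [IsProbabilityMeasure P] {X : Ω → ℝ} (hX : MemLinf P X) (hα : ∀ i, α i ∈ Ico 0 1) :
    specRM P (stepSpectrum l₀ α c) X
      = l₀ * (∫ ω, X ω ∂P) + ∑ i, c i * (1 - α i) * ES P (α i) X := by
  rw [specRM_eq_setIntegral, setIntegral_stepSpectrum_mul (integrableOn_leftQuantile hX)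
    (fun i => (hα i).1), setIntegral_leftQuantile hX]
  congr 1
  refine Finset.sum_congr rfl fun i _ => ?_
  have hα1 : 1 - α i ≠ 0 := sub_ne_zero.2 (hα i).2.ne'
  rw [ES, intervalIntegral.integral_of_le (hα i).2.le, mul_assoc, mul_inv_cancel_left₀ hα1]

theorem monotone_stepSpectrum (hc : ∀ i, 0 ≤ c i) : Monotone (stepSpectrum l₀ α c) :=
  fun _ _ hst => (add_le_add_iff_left l₀).2 <|
    Finset.sum_le_sum fun i _ => monotone_indicator_Ioi (hc i) hst

theorem stepSpectrum_nonneg (hl₀ : 0 ≤ l₀) (hc : ∀ i, 0 ≤ c i) (t : ℝ) :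
    0 ≤ stepSpectrum l₀ α c t :=
  add_nonneg hl₀ (Finset.sum_nonneg fun i _ => indicator_nonneg (fun _ _ => hc i) t)

theorem stepSpectrum_eventuallyEq {p : ℝ} (hp : p ∉ range α) :
    stepSpectrum l₀ α c =ᶠ[𝓝 p] fun _ => stepSpectrum l₀ α c p := by
  have h : ∀ i, ∀ᶠ t in 𝓝 p,
      (Ioi (α i)).indicator (fun _ => c i) t = (Ioi (α i)).indicator (fun _ => c i) p := by
    intro i
    rcases lt_or_gt_of_ne fun h => hp ⟨i, h⟩ with hi | hi
    · filter_upwards [Ioi_mem_nhds hi] with t ht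
      rw [indicator_of_mem ht, indicator_of_mem (mem_Ioi.2 hi)]
    · filter_upwards [Iio_mem_nhds hi] with t (ht : t < α i)
      rw [indicator_of_notMem (notMem_Ioi.2 ht.le), indicator_of_notMem (notMem_Ioi.2 hi.le)]
  filter_upwards [eventually_all.2 h] with t ht
  simp only [stepSpectrum, ht]

theorem tendsto_stepSpectrum_nhdsLT (p : ℝ) :
    Tendsto (stepSpectrum l₀ α c) (𝓝[<] p) (𝓝 (stepSpectrum l₀ α c p)) := by
  have h : ∀ i, Tendsto ((Ioi (α i)).indicator fun _ => c i) (𝓝[<] p)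
      (𝓝 ((Ioi (α i)).indicator (fun _ => c i) p)) := by
    intro i
    refine tendsto_const_nhds.congr' ?_
    rcases lt_or_ge (α i) p with hi | hi
    · filter_upwards [nhdsWithin_le_nhds (Ioi_mem_nhds hi)] with t ht
      rw [indicator_of_mem (mem_Ioi.2 hi), indicator_of_mem ht]
    · filter_upwards [self_mem_nhdsWithin] with t (ht : t < p)
      rw [indicator_of_notMem (notMem_Ioi.2 hi),
        indicator_of_notMem (notMem_Ioi.2 (ht.le.trans hi))]
  exact tendsto_const_nhds.add (tendsto_finsetSum _ fun i _ => h i)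

theorem memG_stepSpectrum (hα : 0 ∉ range α) (hc : ∀ i, 0 ≤ c i) :
    MemG (stepSpectrum l₀ α c) :=
  ⟨(monotone_stepSpectrum hc).monotoneOn _,
    (stepSpectrum_eventuallyEq hα).continuousAt.tendsto.mono_left nhdsWithin_le_nhds,
    fun p _ => tendsto_stepSpectrum_nhdsLT p⟩

theorem PSI_stepSpectrum (hα : ∀ i, α i ∈ Ioo 0 1) (hc : ∀ i, 0 < c i) :
    PSI (stepSpectrum l₀ α c) ∩ Ioo 0 1 = range α := by
  ext p
  refine ⟨fun ⟨hpsi, hp⟩ => ?_, ?_⟩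
  · by_contra hpα
    exact notMem_PSI_of_eventuallyEq hp (stepSpectrum_eventuallyEq hpα) hpsi
  · rintro ⟨i, rfl⟩
    refine ⟨Or.inl ⟨Ioo_subset_Ico_self (hα i), fun s hs => (add_lt_add_iff_left l₀).2 ?_⟩, hα i⟩
    refine Finset.sum_lt_sum (fun j _ => monotone_indicator_Ioi (hc j).le hs.1.le)
      ⟨i, Finset.mem_univ i, ?_⟩
    rw [indicator_of_notMem (notMem_Ioi.2 le_rfl), indicator_of_mem (mem_Ioi.2 hs.1)]
    exact hc i

end StepSpectrum

-- `knot α` enumerates `0 < α 0 < ⋯ < α (n - 1) < 1` from index `0` to `n + 1`, and is `1` beyond.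
def knot {n : ℕ} (α : Fin n → ℝ) : ℕ → ℝ
  | 0 => 0
  | j + 1 => if h : j < n then α ⟨j, h⟩ else 1

section Knot

variable {n : ℕ} {α : Fin n → ℝ}

theorem knot_succ (i : Fin n) : knot α (i + 1) = α i := dif_pos i.isLt

theorem knot_mem_Icc (hα : ∀ i, α i ∈ Ioo 0 1) : ∀ j, knot α j ∈ Icc 0 1
  | 0 => ⟨le_rfl, zero_le_one⟩
  | j + 1 => by
    dsimp only [knot]
    split_ifs
    exacts [Ioo_subset_Icc_self (hα _), ⟨zero_le_one, le_rfl⟩]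

theorem exists_knot_lt_le {t : ℝ} (ht : t ∈ Ioc 0 1) :
    ∃ j ≤ n, knot α j < t ∧ t ≤ knot α (j + 1) := by
  classical
  have hex : ∃ k, t ≤ knot α k := ⟨n + 1, by simpa [knot] using ht.2⟩
  obtain ⟨j, hj⟩ := Nat.exists_eq_add_one_of_ne_zero fun (h : Nat.find hex = 0) => by
    have := Nat.find_spec hex
    rw [h] at this
    exact this.not_gt ht.1
  refine ⟨j, ?_, not_le.1 (Nat.find_min hex (by omega)), hj ▸ Nat.find_spec hex⟩
  have := Nat.find_min' hex (show t ≤ knot α (n + 1) by simpa [knot] using ht.2)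
  omega

variable (hmono : StrictMono α) (hα : ∀ i, α i ∈ Ioo 0 1)
include hmono hα

theorem knot_lt_knot_succ {j : ℕ} (hj : j ≤ n) : knot α j < knot α (j + 1) := by
  rcases j with _ | j
  · dsimp only [knot]
    split_ifs
    exacts [(hα _).1, zero_lt_one]
  · dsimp only [knot]
    rw [dif_pos (show j < n by omega)]
    split_ifs
    exacts [hmono (Fin.mk_lt_mk.2 j.lt_succ_self), (hα _).2]

theorem monotone_knot : Monotone (knot α) := by
  refine monotone_nat_of_le_succ fun j => ?_
  rcases le_or_gt j n with hj | hj
  · exact (knot_lt_knot_succ hmono hα hj).le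
  · obtain ⟨k, rfl⟩ := Nat.exists_eq_add_one_of_ne_zero (by omega : j ≠ 0)
    dsimp only [knot]
    rw [dif_neg (by omega), dif_neg (by omega)]

variable {g : ℝ → ℝ} (hg : MemG g) (hPSI : PSI g ∩ Ioo 0 1 = range α)
include hg hPSI

theorem eq_knot_succ {j : ℕ} {t : ℝ} (ht : t ∈ Ioc (knot α j) (knot α (j + 1))) :
    g t = g (knot α (j + 1)) := by
  refine eq_right_of_Ioo_inter_PSI_eq_empty hg (knot_mem_Icc hα j).1 (knot_mem_Icc hα _).2
    (eq_empty_iff_forall_notMem.2 fun p ⟨hp, hpsi⟩ => ?_) ht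
  have hp01 : p ∈ Ioo 0 1 :=
    ⟨(knot_mem_Icc hα j).1.trans_lt hp.1, hp.2.trans_le (knot_mem_Icc hα _).2⟩
  obtain ⟨i, rfl⟩ : p ∈ range α := hPSI ▸ ⟨hpsi, hp01⟩
  rw [← knot_succ (α := α) i] at hp
  have := (monotone_knot hmono hα).reflect_lt hp.1
  have := (monotone_knot hmono hα).reflect_lt hp.2
  omega

theorem apply_lt_apply_knot (i : Fin n) : g (α i) < g (knot α (i + 2)) := by
  have hlt : α i < knot α (i + 2) := by
    have := knot_lt_knot_succ hmono hα i.isLt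
    rwa [knot_succ (α := α)] at this
  have hPSIi : α i ∈ PSI g := (hPSI.symm ▸ mem_range_self i : α i ∈ PSI g ∩ Ioo 0 1).1
  rcases hPSIi with ⟨-, hR⟩ | ⟨-, hL⟩
  · exact hR _ ⟨hlt, (knot_mem_Icc hα _).2⟩
  -- `α i` cannot be a PSIL since `g` is constant on `(knot α i, α i]`
  have hlt' : knot α i < knot α (i + 1) := knot_lt_knot_succ hmono hα i.isLt.le
  obtain ⟨s, hs⟩ := exists_between hlt'
  have hgs := eq_knot_succ hmono hα hg hPSI ⟨hs.1, hs.2.le⟩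
  rw [knot_succ (α := α)] at hs hgs
  exact absurd hgs (hL s ⟨(knot_mem_Icc hα i).1.trans hs.1.le, hs.2⟩).ne

theorem eq_stepSpectrum_of_PSI_eq {t : ℝ} (ht : t ∈ Ioc 0 1) :
    g t = stepSpectrum (g (knot α 1)) α (fun i => g (knot α (i + 2)) - g (α i)) t := by
  obtain ⟨j, hjn, hjt, htj⟩ := exists_knot_lt_le ht
  have hmem : ∀ k : ℕ, knot α (k + 1) < t ↔ k < j := fun k =>
    ⟨fun h => by have := (monotone_knot hmono hα).reflect_lt (h.trans_le htj); omega,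
      fun h => (monotone_knot hmono hα (by omega : k + 1 ≤ j)).trans_lt hjt⟩
  set v : ℕ → ℝ := fun k => g (knot α (k + 1))
  have hsum : ∑ i : Fin n, (Ioi (α i)).indicator (fun _ => g (knot α (i + 2)) - g (α i)) t
      = v j - v 0 := by
    rw [← Finset.sum_range_sub v j]
    calc _ = ∑ k ∈ Finset.range n, if k < j then v (k + 1) - v k else 0 := by
          rw [← Fin.sum_univ_eq_sum_range]
          refine Finset.sum_congr rfl fun i _ => ?_
          simp only [← knot_succ (α := α) i, indicator_apply, mem_Ioi, hmem]
          rfl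
      _ = ∑ k ∈ Finset.range j, (v (k + 1) - v k) := by
          rw [← Finset.sum_filter]
          congr 1
          ext k
          simp only [Finset.mem_filter, Finset.mem_range]
          omega
  rw [eq_knot_succ hmono hα hg hPSI ⟨hjt, htj⟩, stepSpectrum, hsum]
  ring

end Knot

theorem stmt_19_general {Ω : Type*} [MeasurableSpace Ω] (P : MeasureTheory.Measure Ω)
    [MeasureTheory.IsProbabilityMeasure P]
    (n : ℕ) (α : Fin n → ℝ) (hmono : StrictMono α) (hα : ∀ i, α i ∈ Ioo (0:ℝ) 1) :
    {F : (Ω → ℝ) → ℝ | ∃ g : ℝ → ℝ, IsRiskSpectrum g ∧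
        PSI g ∩ Ioo 0 1 = Set.range α ∧
        ∀ X : Ω → ℝ, MemLinf P X → F X = specRM P g X} =
    {F : (Ω → ℝ) → ℝ | ∃ (l₀ : ℝ) (l : Fin n → ℝ), 0 ≤ l₀ ∧ (∀ i, 0 < l i) ∧
        l₀ + ∑ i, l i = 1 ∧
        ∀ X : Ω → ℝ, MemLinf P X →
          F X = l₀ * (∫ ω, X ω ∂P) + ∑ i, l i * ES P (α i) X} := by
  have hαIcc i := Ioo_subset_Icc_self (hα i)
  have hαIco i := Ioo_subset_Ico_self (hα i)
  ext F
  constructor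
  · rintro ⟨g, ⟨hg, hg₀, hg₁⟩, hPSI, hF⟩
    have hstep : EqOn g (stepSpectrum (g (knot α 1)) α fun i => g (knot α (i + 2)) - g (α i))
        (Ioo 0 1) := fun t ht => eq_stepSpectrum_of_PSI_eq hmono hα hg hPSI (Ioo_subset_Ioc_self ht)
    refine ⟨g (knot α 1), fun i => (g (knot α (i + 2)) - g (α i)) * (1 - α i),
      hg₀ _ (knot_mem_Icc hα 1),
      fun i => mul_pos (sub_pos.2 (apply_lt_apply_knot hmono hα hg hPSI i)) (sub_pos.2 (hα i).2),
      ?_, fun X hX => ?_⟩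
    · rwa [intervalIntegral.integral_congr_Ioo_of_le zero_le_one hstep,
        integral_stepSpectrum hαIcc] at hg₁
    · rw [hF X hX, ← specRM_stepSpectrum hX hαIco]
      exact intervalIntegral.integral_congr_Ioo_of_le zero_le_one fun t ht => by rw [hstep ht]
  · rintro ⟨l₀, l, hl₀, hl, hl₁, hF⟩
    have hc i : l i / (1 - α i) * (1 - α i) = l i := div_mul_cancel₀ _ (sub_pos.2 (hα i).2).ne'
    have hc₀ i : 0 < l i / (1 - α i) := div_pos (hl i) (sub_pos.2 (hα i).2)
    refine ⟨stepSpectrum l₀ α fun i => l i / (1 - α i),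
      ⟨memG_stepSpectrum (fun ⟨i, hi⟩ => (hα i).1.ne' hi) fun i => (hc₀ i).le,
        fun t _ => stepSpectrum_nonneg hl₀ (fun i => (hc₀ i).le) t,
        by rw [integral_stepSpectrum hαIcc]; simpa only [hc] using hl₁⟩,
      PSI_stepSpectrum hα hc₀, fun X hX => ?_⟩
    rw [hF X hX, specRM_stepSpectrum hX hαIco]
    simp only [hc]

/-- For `0 < α₁ < ⋯ < α_n < 1`, the spectral risk measures whose
spectrum `g` satisfies `PSI(g) ∩ (0,1) = {α₁, …, α_n}` are exactly the functionals
`λ₀𝔼 + λ₁ ES_{α₁} + ⋯ + λ_n ES_{α_n}` with `λ₀ ≥ 0`, `λᵢ > 0` and `λ₀ + ∑ λᵢ = 1`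
(as functionals on L∞). -/
theorem stmt_19 {Ω : Type*} [MeasurableSpace Ω] (P : MeasureTheory.Measure Ω)
    [MeasureTheory.IsProbabilityMeasure P] (hP : Atomless P)
    (n : ℕ) (α : Fin n → ℝ) (hmono : StrictMono α) (hα : ∀ i, α i ∈ Ioo (0:ℝ) 1) :
    {F : (Ω → ℝ) → ℝ | ∃ g : ℝ → ℝ, IsRiskSpectrum g ∧
        PSI g ∩ Ioo 0 1 = Set.range α ∧
        ∀ X : Ω → ℝ, MemLinf P X → F X = specRM P g X} =
    {F : (Ω → ℝ) → ℝ | ∃ (l₀ : ℝ) (l : Fin n → ℝ), 0 ≤ l₀ ∧ (∀ i, 0 < l i) ∧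
        l₀ + ∑ i, l i = 1 ∧
        ∀ X : Ω → ℝ, MemLinf P X →
          F X = l₀ * (∫ ω, X ω ∂P) + ∑ i, l i * ES P (α i) X} :=
  stmt_19_general P n α hmono hα
end
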